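/- If φ: ℝ^d → ℝ is differentiable, absolutely convex, and attains a minimum at some x★, then its gradient is bounded: there exists M such that ‖∇φ(x)‖₂ ≤ M for all x ∈ ℝ^d. -/

import Mathlib

open scoped RealInnerProductSpace

/-- `φ` is absolutely convex: `φ(x) ≥ |φ(y) + ⟨∇φ(y), x−y⟩|` for all `x, y`. -/
def AbsolutelyConvex {d : ℕ} (φ : EuclideanSpace ℝ (Fin d) → ℝ) : Prop :=
  ∀ x y, |φ y + ⟪gradient φ y, x - y⟫| ≤ φ x

/-!
The upper bound `φ y + ⟪g, x - y⟫ ≤ φ x` at `x = u` and the lower bound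
`-(φ y + ⟪g, x - y⟫) ≤ φ x` at `x = -u` add up to `2 ⟪g, u⟫ ≤ φ u + φ (-u)`, in which `y` no
longer appears. So every gradient `g = ∇φ(y)` is bounded by the maximum of `φ` on the unit ball.
-/

section InnerProductSpace

variable {E : Type*} [NormedAddCommGroup E] [InnerProductSpace ℝ E]

theorem norm_le_of_forall_inner_le {g : E} {C : ℝ} (h : ∀ u, ‖u‖ ≤ 1 → ⟪g, u⟫ ≤ C) :
    ‖g‖ ≤ C := by
  rcases eq_or_ne g 0 with rfl | hg
  · simpa using h 0 (by simp)
  · have hg' : ‖g‖ ≠ 0 := norm_ne_zero_iff.2 hg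
    have hunit : ‖‖g‖⁻¹ • g‖ ≤ 1 := by
      rw [norm_smul, norm_inv, norm_norm, inv_mul_cancel₀ hg']
    have := h _ hunit
    rwa [real_inner_smul_right, real_inner_self_eq_norm_sq, pow_two, inv_mul_cancel_left₀ hg']
      at this

theorem two_mul_inner_le_add_neg {φ : E → ℝ} {g y : E}
    (h : ∀ x, |φ y + ⟪g, x - y⟫| ≤ φ x) (u : E) : 2 * ⟪g, u⟫ ≤ φ u + φ (-u) := by
  have hu := (abs_le.1 (h u)).2
  have hnu := (abs_le.1 (h (-u))).1
  rw [inner_sub_right] at hu hnu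
  rw [inner_neg_right] at hnu
  linarith

theorem norm_le_of_abs_affine_le {φ : E → ℝ} {g y : E} {C : ℝ}
    (h : ∀ x, |φ y + ⟪g, x - y⟫| ≤ φ x) (hC : ∀ x ∈ Metric.closedBall (0 : E) 1, φ x ≤ C) :
    ‖g‖ ≤ C := by
  refine norm_le_of_forall_inner_le fun u hu => ?_
  have hu' : u ∈ Metric.closedBall (0 : E) 1 := mem_closedBall_zero_iff.2 hu
  have hnu : -u ∈ Metric.closedBall (0 : E) 1 := mem_closedBall_zero_iff.2 (by rwa [norm_neg])
  linarith [two_mul_inner_le_add_neg h u, hC u hu', hC (-u) hnu]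

end InnerProductSpace

theorem stmt_16_general {d : ℕ} (φ : EuclideanSpace ℝ (Fin d) → ℝ)
    (hφ : Differentiable ℝ φ) (habs : AbsolutelyConvex φ) :
    ∃ M : ℝ, ∀ x, ‖gradient φ x‖ ≤ M := by
  obtain ⟨C, hC⟩ := (isCompact_closedBall 0 1).exists_bound_of_continuousOn
    hφ.continuous.continuousOn
  exact ⟨C, fun y => norm_le_of_abs_affine_le (habs · y)
    fun x hx => (le_abs_self _).trans (hC x hx)⟩

theorem stmt_16 {d : ℕ} (φ : EuclideanSpace ℝ (Fin d) → ℝ)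
    (hφ : Differentiable ℝ φ) (habs : AbsolutelyConvex φ)
    (hmin : ∃ xstar, ∀ x, φ xstar ≤ φ x) :
    ∃ M : ℝ, ∀ x, ‖gradient φ x‖ ≤ M :=
  stmt_16_general φ hφ habs
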